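/- Suppose (b,c) = (2,2) or (b,c) = (1,4). For every n ≥ 1, z_n is a monic Laurent polynomial in y₁ and y₂, and its Newton polygon Newt(z_n) is the triangle with vertices (−n,−n), (n,−n), (−n,n) if (b,c) = (2,2), respectively with vertices (−n,−2n), (n,−2n), (−n,2n) if (b,c) = (1,4). -/

import Mathlib

open MvPolynomial Finset

noncomputable section

/-- The ambient field `F = ℚ(y₁, y₂)`. -/
abbrev Fq : Type := FractionRing (MvPolynomial (Fin 2) ℚ)

/-- The two independent indeterminates of `F`. -/
def gen (i : Fin 2) : Fq := algebraMap (MvPolynomial (Fin 2) ℚ) Fq (X i)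

/-- `y : ℤ → Fq` is the family of cluster variables of `A(b,c)`:
`y 1, y 2` are the two indeterminates and the exchange relations hold. -/
def IsClusterSeq (b c : ℕ) (y : ℤ → Fq) : Prop :=
  y 1 = gen 0 ∧ y 2 = gen 1 ∧
    ∀ m : ℤ, y (m - 1) * y (m + 1) = (if Odd m then y m ^ b else y m ^ c) + 1

/-- The cluster algebra `A(b,c)`: the subring of `F` generated by all cluster variables. -/
def clusterAlg (y : ℤ → Fq) : Subring Fq := Subring.closure (Set.range y)

/-- The cluster variable `y m` as an element of the cluster algebra. -/
def yMem (y : ℤ → Fq) (m : ℤ) : clusterAlg y := ⟨y m, Subring.subset_closure ⟨m, rfl⟩⟩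

/-- `f` is (the coefficient function of) a Laurent-polynomial expansion of `x`
in the cluster `{y m, y (m+1)}`. -/
def IsLaurentExp (y : ℤ → Fq) (m : ℤ) (f : ℤ × ℤ →₀ ℤ) (x : Fq) : Prop :=
  x = ∑ γ ∈ f.support, (f γ : Fq) * y m ^ γ.1 * y (m + 1) ^ γ.2

/-- `x` is a positive element: it is nonzero and for every `m` its Laurent expansion in
`y m, y (m+1)` has nonnegative coefficients. -/
def IsPositive (y : ℤ → Fq) (x : Fq) : Prop :=
  x ≠ 0 ∧ ∀ m : ℤ, ∃ f : ℤ × ℤ →₀ ℤ, (∀ γ, 0 ≤ f γ) ∧ IsLaurentExp y m f x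

/-- `x` is a cluster monomial `y m ^ p * y (m+1) ^ q`. -/
def IsClusterMonomial (y : ℤ → Fq) (x : Fq) : Prop :=
  ∃ (m : ℤ) (p q : ℕ), x = y m ^ p * y (m + 1) ^ q

/-- `x` has denominator vector `a = (a₁, a₂)`, i.e. `x = N(y₁,y₂)/(y₁^a₁ y₂^a₂)` with
`N ∈ ℤ[y₁,y₂]` having constant term `1`. -/
def HasDenomVector (y : ℤ → Fq) (a : ℤ × ℤ) (x : Fq) : Prop :=
  ∃ N : MvPolynomial (Fin 2) ℤ, N.coeff 0 = 1 ∧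
    x = MvPolynomial.aeval (fun i : Fin 2 => if i = 0 then y 1 else y 2) N /
        (y 1 ^ a.1 * y 2 ^ a.2)

/-- `B` is a basis of the subring `A` as a `ℤ`-module. -/
def IsZBasisOf (B : Set Fq) (A : Subring Fq) : Prop :=
  LinearIndependent ℤ (fun x : B => (x : Fq)) ∧
    (Submodule.span ℤ B : Set Fq) = (A : Set Fq)

/-- `x` is a finite linear combination of elements of `B` with nonnegative integer
coefficients. -/
def IsNonnegComb (B : Set Fq) (x : Fq) : Prop :=
  ∃ f : Fq →₀ ℕ, ↑f.support ⊆ B ∧ x = f.sum fun v n => n • v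

/-- Normalized Chebyshev polynomials: `T₀ = 1`, `T₁ = t`, `T₂ = t² - 2`,
`T_{n+1} = t T_n - T_{n-1}` for `n ≥ 2`, so `T_n(t + t⁻¹) = tⁿ + t⁻ⁿ` for `n ≥ 1`. -/
def cheb : ℕ → Polynomial ℤ
  | 0 => 1
  | 1 => Polynomial.X
  | 2 => Polynomial.X ^ 2 - 2
  | n + 3 => Polynomial.X * cheb (n + 2) - cheb (n + 1)

/-- The element `z` in the affine cases: `z = y₀y₃ - y₁y₂` for `(b,c) = (2,2)` and
`z = y₀²y₃ - (y₁+2)y₂²` for `(b,c) = (1,4)`. -/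
def zElem (b : ℕ) (y : ℤ → Fq) : Fq :=
  if b = 2 then y 0 * y 3 - y 1 * y 2
  else y 0 ^ 2 * y 3 - (y 1 + 2) * y 2 ^ 2

/-- `z_n = T_n(z)` (so `z_0 = 1`). -/
def zn (b : ℕ) (y : ℤ → Fq) (n : ℕ) : Fq := Polynomial.aeval (zElem b y) (cheb n)

/-- `z_j` for integer index, with the convention `z_j = 0` for `j < 0`. -/
def znI (b : ℕ) (y : ℤ → Fq) (j : ℤ) : Fq := if j < 0 then 0 else zn b y j.toNat

/-- A lattice point viewed in `ℝ²`. -/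
def toR (γ : ℤ × ℤ) : ℝ × ℝ := ((γ.1 : ℝ), (γ.2 : ℝ))

/-- The Newton polygon of a Laurent expansion: the convex hull of its support. -/
def newt (f : ℤ × ℤ →₀ ℤ) : Set (ℝ × ℝ) := convexHull ℝ (toR '' ↑f.support)

/-- The expansion `f` is monic: every vertex (extreme point) of its Newton polygon
carries coefficient `1`. -/
def IsMonicExp (f : ℤ × ℤ →₀ ℤ) : Prop :=
  ∀ γ : ℤ × ℤ, toR γ ∈ Set.extremePoints ℝ (newt f) → f γ = 1

/-- The triangle `Δ(a)` with vertices `(-a₁,-a₂)`, `(-a₁+b a₂, -a₂)`, `(-a₁, -a₂+c a₁)`. -/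
def tri (b c : ℕ) (a : ℤ × ℤ) : Set (ℝ × ℝ) :=
  convexHull ℝ
    {toR (-a.1, -a.2), toR (-a.1 + (b : ℤ) * a.2, -a.2), toR (-a.1, -a.2 + (c : ℤ) * a.1)}

/-- The simple reflection `s₁`. -/
def s1 (b : ℕ) (v : ℤ × ℤ) : ℤ × ℤ := (-v.1 + (b : ℤ) * v.2, v.2)

/-- The simple reflection `s₂`. -/
def s2 (c : ℕ) (v : ℤ × ℤ) : ℤ × ℤ := (v.1, (c : ℤ) * v.1 - v.2)

/-- `a` is a positive real root: it has nonnegative coordinates and lies in the orbit of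
`(1,0)` or `(0,1)` under the group generated by `s₁` and `s₂` (since `s₁, s₂` are
involutions, this orbit is the set of values of words in `s₁, s₂` applied to `(1,0)`
or `(0,1)`). -/
def IsPosRealRoot (b c : ℕ) (a : ℤ × ℤ) : Prop :=
  0 ≤ a.1 ∧ 0 ≤ a.2 ∧
    ∃ (w : List Bool) (e : ℤ × ℤ), (e = (1, 0) ∨ e = (0, 1)) ∧
      a = w.foldr (fun t v => if t then s1 b v else s2 c v) e

/-- `a` is a positive imaginary root. -/
def IsPosImagRoot (b c : ℕ) (a : ℤ × ℤ) : Prop :=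
  0 < a.1 ∧ 0 < a.2 ∧ (c : ℤ) * a.1 ^ 2 - (b : ℤ) * c * a.1 * a.2 + (b : ℤ) * a.2 ^ 2 ≤ 0

lemma gen_ne (i : Fin 2) : gen i ≠ 0 := by
  have hinj : Function.Injective (algebraMap (MvPolynomial (Fin 2) ℚ) Fq) :=
    IsFractionRing.injective _ _
  intro h
  exact MvPolynomial.X_ne_zero i (hinj (by simpa [gen] using h))

def ev (u v : Fq) (f : ℤ × ℤ →₀ ℤ) : Fq := f.sum fun γ c => (c : Fq) * u ^ γ.1 * v ^ γ.2

lemma ev_eq_sum (u v : Fq) (f : ℤ × ℤ →₀ ℤ) :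
    ev u v f = ∑ γ ∈ f.support, ((f γ : Fq) * u ^ γ.1 * v ^ γ.2) := rfl

lemma ev_single (u v : Fq) (γ : ℤ × ℤ) (c : ℤ) :
    ev u v (Finsupp.single γ c) = (c : Fq) * u ^ γ.1 * v ^ γ.2 := by
  unfold ev
  rw [Finsupp.sum_single_index]
  simp

lemma ev_add (u v : Fq) (f g : ℤ × ℤ →₀ ℤ) : ev u v (f + g) = ev u v f + ev u v g := by
  unfold ev
  rw [Finsupp.sum_add_index'] <;> intros <;> push_cast <;> ring

lemma ev_sub (u v : Fq) (f g : ℤ × ℤ →₀ ℤ) : ev u v (f - g) = ev u v f - ev u v g := by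
  unfold ev
  rw [Finsupp.sum_sub_index]
  intros; push_cast; ring

lemma ev_smul (u v : Fq) (e : ℤ) (f : ℤ × ℤ →₀ ℤ) : ev u v (e • f) = (e : Fq) * ev u v f := by
  unfold ev
  rw [Finsupp.sum_smul_index' (by intro i; simp), Finsupp.mul_sum]
  apply Finsupp.sum_congr
  intro γ _
  simp only [smul_eq_mul]
  push_cast; ring

def sh (w : ℤ × ℤ) (f : ℤ × ℤ →₀ ℤ) : ℤ × ℤ →₀ ℤ :=
  Finsupp.equivMapDomain (Equiv.addRight w) f

lemma sh_apply (w : ℤ × ℤ) (f : ℤ × ℤ →₀ ℤ) (γ : ℤ × ℤ) : sh w f γ = f (γ - w) := by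
  simp [sh, Finsupp.equivMapDomain_apply, sub_eq_add_neg]

lemma ev_sh (u v : Fq) (hu : u ≠ 0) (hv : v ≠ 0) (w : ℤ × ℤ) (f : ℤ × ℤ →₀ ℤ) :
    ev u v (sh w f) = u ^ w.1 * v ^ w.2 * ev u v f := by
  unfold ev sh
  rw [Finsupp.equivMapDomain_eq_mapDomain, Finsupp.sum_mapDomain_index, Finsupp.mul_sum]
  · apply Finsupp.sum_congr
    intro γ _
    simp only [Equiv.coe_addRight, Prod.fst_add, Prod.snd_add]
    rw [zpow_add₀ hu, zpow_add₀ hv]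
    ring
  · intro; simp
  · intros; push_cast; ring

lemma ev_inj_zero (f : ℤ × ℤ →₀ ℤ) (h : ev (gen 0) (gen 1) f = 0) : f = 0 := by
  classical
  set M : ℤ := ∑ γ ∈ f.support, (|γ.1| + |γ.2|) with hM
  have hMγ : ∀ γ ∈ f.support, 0 ≤ γ.1 + M ∧ 0 ≤ γ.2 + M := by
    intro γ hγ
    have h1 : |γ.1| + |γ.2| ≤ M :=
      Finset.single_le_sum (f := fun γ : ℤ × ℤ => |γ.1| + |γ.2|) (fun i _ => by positivity) hγ
    have h2 := neg_abs_le γ.1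
    have h3 := neg_abs_le γ.2
    have h4 := abs_nonneg γ.1
    have h5 := abs_nonneg γ.2
    constructor <;> linarith
  set P : MvPolynomial (Fin 2) ℚ :=
    ∑ γ ∈ f.support, ((f γ : MvPolynomial (Fin 2) ℚ) * X 0 ^ (γ.1 + M).toNat * X 1 ^ (γ.2 + M).toNat)
    with hP
  have hPmap : algebraMap (MvPolynomial (Fin 2) ℚ) Fq P
      = gen 0 ^ M * gen 1 ^ M * ev (gen 0) (gen 1) f := by
    rw [hP, map_sum, ev_eq_sum, Finset.mul_sum]
    refine Finset.sum_congr rfl fun γ hγ => ?_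
    rw [map_mul, map_mul, map_pow, map_pow, map_intCast]
    have e1 : ((γ.1 + M).toNat : ℤ) = γ.1 + M := Int.toNat_of_nonneg (hMγ γ hγ).1
    have e2 : ((γ.2 + M).toNat : ℤ) = γ.2 + M := Int.toNat_of_nonneg (hMγ γ hγ).2
    have g1 : (algebraMap (MvPolynomial (Fin 2) ℚ) Fq) (X 0) ^ (γ.1 + M).toNat
        = gen 0 ^ (γ.1 + M) := by
      rw [← zpow_natCast, e1]; rfl
    have g2 : (algebraMap (MvPolynomial (Fin 2) ℚ) Fq) (X 1) ^ (γ.2 + M).toNat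
        = gen 1 ^ (γ.2 + M) := by
      rw [← zpow_natCast, e2]; rfl
    rw [g1, g2, zpow_add₀ (gen_ne 0), zpow_add₀ (gen_ne 1)]
    ring
  have hP0 : P = 0 := by
    apply IsFractionRing.injective (MvPolynomial (Fin 2) ℚ) Fq
    rw [hPmap, h, mul_zero, map_zero]
  ext γ0
  by_cases hγ0 : γ0 ∈ f.support
  swap
  · simpa using Finsupp.notMem_support_iff.mp hγ0
  · exfalso
    set d : Fin 2 →₀ ℕ :=
      Finsupp.single 0 (γ0.1 + M).toNat + Finsupp.single 1 (γ0.2 + M).toNat with hd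
    have hterm : ∀ γ : ℤ × ℤ, ((f γ : MvPolynomial (Fin 2) ℚ) * X 0 ^ (γ.1 + M).toNat
        * X 1 ^ (γ.2 + M).toNat)
        = monomial (Finsupp.single 0 (γ.1 + M).toNat + Finsupp.single 1 (γ.2 + M).toNat)
          ((f γ : ℚ)) := by
      intro γ
      rw [show ((f γ : ℤ) : MvPolynomial (Fin 2) ℚ) = C ((f γ : ℚ)) from
          (map_intCast (C : ℚ →+* MvPolynomial (Fin 2) ℚ) (f γ)).symm,
        X_pow_eq_monomial, X_pow_eq_monomial, C_mul_monomial, monomial_mul]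
      simp
    have hcoeff := congrArg (MvPolynomial.coeff d) hP0
    rw [hP, MvPolynomial.coeff_sum] at hcoeff
    simp only [hterm, MvPolynomial.coeff_monomial] at hcoeff
    rw [Finset.sum_eq_single γ0] at hcoeff
    · rw [if_pos rfl] at hcoeff
      have : (f γ0 : ℚ) = 0 := by simpa [map_zero] using hcoeff
      exact Finsupp.mem_support_iff.mp hγ0 (by exact_mod_cast this)
    · intro γ hγ hne
      rw [if_neg]
      intro heq
      apply hne
      have ha : (γ.1 + M).toNat = (γ0.1 + M).toNat := by
        have := congrArg (fun g : Fin 2 →₀ ℕ => g 0) heq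
        simpa [hd, Finsupp.single_apply] using this
      have hb : (γ.2 + M).toNat = (γ0.2 + M).toNat := by
        have := congrArg (fun g : Fin 2 →₀ ℕ => g 1) heq
        simpa [hd, Finsupp.single_apply] using this
      have h1 : γ.1 = γ0.1 := by
        have e1 := Int.toNat_of_nonneg (hMγ γ hγ).1
        have e2 := Int.toNat_of_nonneg (hMγ γ0 hγ0).1
        omega
      have h2 : γ.2 = γ0.2 := by
        have e1 := Int.toNat_of_nonneg (hMγ γ hγ).2
        have e2 := Int.toNat_of_nonneg (hMγ γ0 hγ0).2
        omega
      exact Prod.ext h1 h2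
    · intro hns; exact absurd hγ0 hns

def zmulF (d e : ℤ) (f : ℤ × ℤ →₀ ℤ) : ℤ × ℤ →₀ ℤ :=
  sh (1, -d) f + sh (-1, d) f + sh (-1, -d) f + e • sh (0, -d) f

lemma zmulF_apply (d e : ℤ) (f : ℤ × ℤ →₀ ℤ) (x y : ℤ) :
    zmulF d e f (x, y) = f (x - 1, y + d) + f (x + 1, y - d) + f (x + 1, y + d)
      + e * f (x, y + d) := by
  simp only [zmulF, Finsupp.add_apply, Finsupp.smul_apply, smul_eq_mul, sh_apply,
    Prod.mk_sub_mk]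
  norm_num [sub_neg_eq_add]

def FF (d e : ℤ) : ℕ → (ℤ × ℤ →₀ ℤ)
  | 0 => Finsupp.single (0, 0) 1
  | 1 => zmulF d e (Finsupp.single (0, 0) 1)
  | 2 => zmulF d e (FF d e 1) - Finsupp.single (0, 0) 2
  | (n + 3) => zmulF d e (FF d e (n + 2)) - FF d e (n + 1)

/-- the lattice triangle region at level `N`. -/

def Reg (d N x y : ℤ) : Prop := -N ≤ x ∧ -(d * N) ≤ y ∧ d * x + y ≤ 0

/-- the invariant -/

def Invt (d e : ℤ) (n : ℕ) (f : ℤ × ℤ →₀ ℤ) : Prop :=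
  (∀ x y : ℤ, ¬ Reg d n x y → f (x, y) = 0) ∧
    f (-(n : ℤ), -(d * n)) = 1 ∧ f ((n : ℤ), -(d * n)) = 1 ∧ f (-(n : ℤ), d * n) = 1

lemma step_inv {d e : ℤ} (hd : d = 1 ∨ d = 2) (m : ℕ) (f g : ℤ × ℤ →₀ ℤ)
    (hf : Invt d e m f)
    (hg0 : ∀ x y : ℤ, ¬ Reg d (m + 1) x y → g (x, y) = 0)
    (hgA : g (-((m : ℤ) + 1), -(d * ((m : ℤ) + 1))) = 0)
    (hgB : g ((m : ℤ) + 1, -(d * ((m : ℤ) + 1))) = 0)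
    (hgC : g (-((m : ℤ) + 1), d * ((m : ℤ) + 1)) = 0) :
    Invt d e (m + 1) (zmulF d e f - g) := by
  obtain ⟨hf0, hfA, hfB, hfC⟩ := hf
  have key : ∀ x y : ℤ, (zmulF d e f - g) (x, y)
      = f (x - 1, y + d) + f (x + 1, y - d) + f (x + 1, y + d) + e * f (x, y + d) - g (x, y) := by
    intro x y
    rw [Finsupp.sub_apply, zmulF_apply]
  refine ⟨?_, ?_, ?_, ?_⟩
  · intro x y hxy
    unfold Reg at hxy
    rw [key, hg0 x y hxy,
      hf0 _ _ (by unfold Reg at *; rcases hd with rfl | rfl <;> push_cast at * <;> omega),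
      hf0 _ _ (by unfold Reg at *; rcases hd with rfl | rfl <;> push_cast at * <;> omega),
      hf0 _ _ (by unfold Reg at *; rcases hd with rfl | rfl <;> push_cast at * <;> omega),
      hf0 _ _ (by unfold Reg at *; rcases hd with rfl | rfl <;> push_cast at * <;> omega)]
    ring
  · -- vertex A
    have : ((m : ℤ) + 1 : ℤ) = ((m + 1 : ℕ) : ℤ) := by push_cast; ring
    rw [← this] at *
    rw [key, hgA,
      hf0 (-((m : ℤ) + 1) - 1) (-(d * ((m : ℤ) + 1)) + d)
        (by unfold Reg; rcases hd with rfl | rfl <;> omega),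
      hf0 (-((m : ℤ) + 1) + 1) (-(d * ((m : ℤ) + 1)) - d)
        (by unfold Reg; rcases hd with rfl | rfl <;> omega),
      hf0 (-((m : ℤ) + 1)) (-(d * ((m : ℤ) + 1)) + d)
        (by unfold Reg; rcases hd with rfl | rfl <;> omega),
      show (-((m : ℤ) + 1) + 1, -(d * ((m : ℤ) + 1)) + d) = (-(m : ℤ), -(d * m)) by
        rw [Prod.mk.injEq]; constructor <;> ring,
      hfA]
    ring
  · -- vertex B
    have : ((m : ℤ) + 1 : ℤ) = ((m + 1 : ℕ) : ℤ) := by push_cast; ring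
    rw [← this] at *
    rw [key, hgB,
      hf0 ((m : ℤ) + 1 + 1) (-(d * ((m : ℤ) + 1)) - d)
        (by unfold Reg; rcases hd with rfl | rfl <;> omega),
      hf0 ((m : ℤ) + 1 + 1) (-(d * ((m : ℤ) + 1)) + d)
        (by unfold Reg; rcases hd with rfl | rfl <;> omega),
      hf0 ((m : ℤ) + 1) (-(d * ((m : ℤ) + 1)) + d)
        (by unfold Reg; rcases hd with rfl | rfl <;> omega),
      show ((m : ℤ) + 1 - 1, -(d * ((m : ℤ) + 1)) + d) = ((m : ℤ), -(d * m)) by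
        rw [Prod.mk.injEq]; constructor <;> ring,
      hfB]
    ring
  · -- vertex C
    have : ((m : ℤ) + 1 : ℤ) = ((m + 1 : ℕ) : ℤ) := by push_cast; ring
    rw [← this] at *
    rw [key, hgC,
      hf0 (-((m : ℤ) + 1) - 1) (d * ((m : ℤ) + 1) + d)
        (by unfold Reg; rcases hd with rfl | rfl <;> omega),
      hf0 (-((m : ℤ) + 1) + 1) (d * ((m : ℤ) + 1) + d)
        (by unfold Reg; rcases hd with rfl | rfl <;> omega),
      hf0 (-((m : ℤ) + 1)) (d * ((m : ℤ) + 1) + d)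
        (by unfold Reg; rcases hd with rfl | rfl <;> omega),
      show (-((m : ℤ) + 1) + 1, d * ((m : ℤ) + 1) - d) = (-(m : ℤ), d * m) by
        rw [Prod.mk.injEq]; constructor <;> ring,
      hfC]
    ring

lemma sub_zero_eq (f : ℤ × ℤ →₀ ℤ) : f = f - 0 := by simp

lemma FF_inv {d e : ℤ} (hd : d = 1 ∨ d = 2) (n : ℕ) : Invt d e n (FF d e n) := by
  induction n using Nat.strong_induction_on with
  | _ n ih =>
    match n with
    | 0 =>
      refine ⟨?_, ?_, ?_, ?_⟩
      · intro x y hxy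
        unfold Reg at hxy
        simp only [FF, Finsupp.single_apply]
        rw [if_neg]
        intro hp
        rw [Prod.mk.injEq] at hp
        rcases hd with rfl | rfl <;> omega
      all_goals simp [FF, Finsupp.single_apply]
    | 1 => 
      have h0 : Invt d e 0 (FF d e 0) := ih 0 (by omega)
      have := step_inv hd 0 (FF d e 0) 0 h0 (by simp) (by simp) (by simp) (by simp)
      simp only [Nat.cast_zero, zero_add, sub_zero] at this
      exact this
    | 2 =>
      have h1 : Invt d e 1 (FF d e 1) := ih 1 (by omega)
      have h2 := step_inv hd 1 (FF d e 1) (Finsupp.single (0, 0) 2) h1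
        (fun x y hxy => by
          simp only [Finsupp.single_apply]
          rw [if_neg]
          intro hp
          rw [Prod.mk.injEq] at hp
          unfold Reg at hxy
          rcases hd with rfl | rfl <;> omega)
        (by rcases hd with rfl | rfl <;> norm_num [Finsupp.single_apply, Prod.ext_iff])
        (by rcases hd with rfl | rfl <;> norm_num [Finsupp.single_apply, Prod.ext_iff])
        (by rcases hd with rfl | rfl <;> norm_num [Finsupp.single_apply, Prod.ext_iff])
      exact h2
    | (n + 3) =>
      have h2 : Invt d e (n + 2) (FF d e (n + 2)) := ih (n + 2) (by omega)
      have h1 : Invt d e (n + 1) (FF d e (n + 1)) := ih (n + 1) (by omega)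
      have h3 := step_inv hd (n + 2) (FF d e (n + 2)) (FF d e (n + 1)) h2
        (fun x y hxy => h1.1 x y (by unfold Reg at *; rcases hd with rfl | rfl <;>
          push_cast at * <;> omega))
        (h1.1 _ _ (by unfold Reg; rcases hd with rfl | rfl <;> push_cast <;> omega))
        (h1.1 _ _ (by unfold Reg; rcases hd with rfl | rfl <;> push_cast <;> omega))
        (h1.1 _ _ (by unfold Reg; rcases hd with rfl | rfl <;> push_cast <;> omega))
      exact h3

lemma zn_zero (b : ℕ) (y : ℤ → Fq) : zn b y 0 = 1 := by simp [zn, cheb]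

lemma zn_one (b : ℕ) (y : ℤ → Fq) : zn b y 1 = zElem b y := by simp [zn, cheb]

lemma zn_two (b : ℕ) (y : ℤ → Fq) : zn b y 2 = zElem b y * zn b y 1 - 2 := by
  simp only [zn, cheb, map_sub, map_pow, Polynomial.aeval_X]
  rw [map_ofNat]
  ring

lemma zn_rec (b : ℕ) (y : ℤ → Fq) (n : ℕ) :
    zn b y (n + 3) = zElem b y * zn b y (n + 2) - zn b y (n + 1) := by
  unfold zn
  rw [show cheb (n + 3) = Polynomial.X * cheb (n + 2) - cheb (n + 1) from rfl]
  simp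

/-- the Laurent expansion of `z` -/

def Zexpr (d e : ℤ) (u v : Fq) : Fq :=
  u ^ (1 : ℤ) * v ^ (-d) + u ^ (-1 : ℤ) * v ^ d + u ^ (-1 : ℤ) * v ^ (-d)
    + (e : Fq) * (u ^ (0 : ℤ) * v ^ (-d))

lemma ev_zmulF (u v : Fq) (hu : u ≠ 0) (hv : v ≠ 0) (d e : ℤ) (f : ℤ × ℤ →₀ ℤ) :
    ev u v (zmulF d e f) = Zexpr d e u v * ev u v f := by
  unfold zmulF Zexpr
  rw [ev_add, ev_add, ev_add, ev_smul, ev_sh u v hu hv, ev_sh u v hu hv, ev_sh u v hu hv,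
    ev_sh u v hu hv]
  ring

lemma ev_FF (b : ℕ) (y : ℤ → Fq) (d e : ℤ)
    (hz : zElem b y = Zexpr d e (gen 0) (gen 1)) (n : ℕ) :
    ev (gen 0) (gen 1) (FF d e n) = zn b y n := by
  induction n using Nat.strong_induction_on with
  | _ n ih =>
    match n with
    | 0 => simp [FF, ev_single, zn_zero]
    | 1 =>
      rw [show FF d e 1 = zmulF d e (FF d e 0) from rfl,
        ev_zmulF _ _ (gen_ne 0) (gen_ne 1), ih 0 (by omega), zn_zero, zn_one, hz, mul_one]
    | 2 =>
      rw [show FF d e 2 = zmulF d e (FF d e 1) - Finsupp.single (0, 0) 2 from rfl,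
        ev_sub, ev_zmulF _ _ (gen_ne 0) (gen_ne 1), ih 1 (by omega), ev_single, zn_two, hz]
      norm_num
    | (n + 3) =>
      rw [show FF d e (n + 3) = zmulF d e (FF d e (n + 2)) - FF d e (n + 1) from rfl,
        ev_sub, ev_zmulF _ _ (gen_ne 0) (gen_ne 1), ih (n + 2) (by omega), ih (n + 1) (by omega),
        zn_rec, hz]

lemma hz22 (y : ℤ → Fq) (hy : IsClusterSeq 2 2 y) :
    zElem 2 y = Zexpr 1 0 (gen 0) (gen 1) := by
  obtain ⟨h1, h2, hrec⟩ := hy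
  have hY1 : y 1 ≠ 0 := by rw [h1]; exact gen_ne 0
  have hY2 : y 2 ≠ 0 := by rw [h2]; exact gen_ne 1
  have hr1 := hrec 1
  have hr2 := hrec 2
  norm_num at hr1 hr2
  rw [← h1, ← h2]
  have key : zElem 2 y * (y 1 * y 2) = y 1 ^ 2 + y 2 ^ 2 + 1 := by
    unfold zElem
    rw [if_pos rfl, show (y 0 * y 3 - y 1 * y 2) * (y 1 * y 2)
      = (y 0 * y 2) * (y 1 * y 3) - (y 1 * y 2) ^ 2 from by ring, hr1, hr2]
    ring
  have key2 : Zexpr 1 0 (y 1) (y 2) * (y 1 * y 2) = y 1 ^ 2 + y 2 ^ 2 + 1 := by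
    unfold Zexpr
    simp only [zpow_one, zpow_neg, zpow_zero, Int.cast_zero]
    field_simp
    ring
  exact mul_right_cancel₀ (mul_ne_zero hY1 hY2) (key.trans key2.symm)

lemma hz14 (y : ℤ → Fq) (hy : IsClusterSeq 1 4 y) :
    zElem 1 y = Zexpr 2 2 (gen 0) (gen 1) := by
  obtain ⟨h1, h2, hrec⟩ := hy
  have hY1 : y 1 ≠ 0 := by rw [h1]; exact gen_ne 0
  have hY2 : y 2 ≠ 0 := by rw [h2]; exact gen_ne 1
  have hr1 := hrec 1
  have hr2 := hrec 2
  norm_num at hr1 hr2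
  rw [← h1, ← h2]
  have key : zElem 1 y * (y 1 * y 2 ^ 2) = y 2 ^ 4 + (y 1 + 1) ^ 2 := by
    unfold zElem
    rw [if_neg (by norm_num), show (y 0 ^ 2 * y 3 - (y 1 + 2) * y 2 ^ 2) * (y 1 * y 2 ^ 2)
      = (y 0 * y 2) ^ 2 * (y 1 * y 3) - (y 1 + 2) * y 1 * y 2 ^ 4 from by ring, hr1, hr2]
    ring
  have key2 : Zexpr 2 2 (y 1) (y 2) * (y 1 * y 2 ^ 2) = y 2 ^ 4 + (y 1 + 1) ^ 2 := by
    unfold Zexpr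
    simp only [zpow_one, zpow_neg, zpow_zero, show ((2:ℤ)) = ((2:ℕ):ℤ) from by norm_num,
      zpow_natCast]
    push_cast
    have hA : y 1 * (y 1)⁻¹ = 1 := mul_inv_cancel₀ hY1
    have hB : y 2 ^ 2 * (y 2 ^ 2)⁻¹ = 1 := mul_inv_cancel₀ (pow_ne_zero 2 hY2)
    linear_combination (y 1 ^ 2 + 2 * y 1 + y 1 * (y 1)⁻¹) * hB + (y 2 ^ 4 + 1) * hA
  exact mul_right_cancel₀ (mul_ne_zero hY1 (pow_ne_zero 2 hY2)) (key.trans key2.symm)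

lemma toR_inj : Function.Injective toR := by
  intro γ1 γ2 h
  unfold toR at h
  rw [Prod.mk.injEq] at h
  rw [Prod.ext_iff]
  exact ⟨by exact_mod_cast h.1, by exact_mod_cast h.2⟩

lemma combo_mem {A B C : ℝ × ℝ} {a b c : ℝ} (ha : 0 ≤ a) (hb : 0 ≤ b) (hc : 0 ≤ c)
    (hs : a + b + c = 1) :
    a • A + b • B + c • C ∈ convexHull ℝ ({A, B, C} : Set (ℝ × ℝ)) := by
  have h := Finset.centerMass_mem_convexHull (s := ({A, B, C} : Set (ℝ × ℝ)))
    (t := (Finset.univ : Finset (Fin 3)))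
    (w := ![a, b, c]) (z := ![A, B, C])
    (by intro i _; fin_cases i <;> simpa)
    (by simp [Fin.sum_univ_three, hs])
    (by intro i _; fin_cases i <;> simp [Set.mem_insert_iff])
  rw [Finset.centerMass] at h
  simpa [Fin.sum_univ_three, hs] using h

lemma reg_mem_tri {d : ℤ} (hd0 : 0 < d) (n : ℕ) (hn : 1 ≤ n) (x y : ℤ) (h : Reg d n x y) :
    toR (x, y) ∈ convexHull ℝ
      ({toR (-(n : ℤ), -(d * n)), toR ((n : ℤ), -(d * n)), toR (-(n : ℤ), d * n)} :
        Set (ℝ × ℝ)) := by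
  obtain ⟨hr1, hr2, hr3⟩ := h
  have hdR : (0 : ℝ) < (d : ℝ) := by exact_mod_cast hd0
  have hnR : (0 : ℝ) < (n : ℝ) := by exact_mod_cast hn
  set a : ℝ := -((d : ℝ) * x + y) / (2 * d * n) with hadef
  set bb : ℝ := ((x : ℝ) + n) / (2 * n) with hbdef
  set cc : ℝ := ((y : ℝ) + d * n) / (2 * d * n) with hcdef
  have hr1R : -(n : ℝ) ≤ (x : ℝ) := by exact_mod_cast hr1
  have hr2R : -((d : ℝ) * n) ≤ (y : ℝ) := by exact_mod_cast hr2
  have hr3R : (d : ℝ) * x + y ≤ 0 := by exact_mod_cast hr3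
  have ha : 0 ≤ a := by apply div_nonneg (by linarith) (by positivity)
  have hb : 0 ≤ bb := by apply div_nonneg (by linarith) (by positivity)
  have hc : 0 ≤ cc := by apply div_nonneg (by linarith) (by positivity)
  have hs : a + bb + cc = 1 := by
    rw [hadef, hbdef, hcdef]
    field_simp
    ring
  have hp : toR (x, y) = a • toR (-(n : ℤ), -(d * n)) + bb • toR ((n : ℤ), -(d * n))
      + cc • toR (-(n : ℤ), d * n) := by
    unfold toR
    simp only [Prod.smul_mk, Prod.mk_add_mk, Prod.mk.injEq, smul_eq_mul]
    push_cast
    constructor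
    · rw [hadef, hbdef, hcdef]; field_simp; ring
    · rw [hadef, hbdef, hcdef]; field_simp; ring
  rw [hp]
  exact combo_mem ha hb hc hs

lemma isLaurent_iff (y : ℤ → Fq) (h1 : y 1 = gen 0) (h2 : y 2 = gen 1)
    (f : ℤ × ℤ →₀ ℤ) (x : Fq) : IsLaurentExp y 1 f x ↔ x = ev (gen 0) (gen 1) f := by
  unfold IsLaurentExp
  rw [ev_eq_sum]
  have : ∀ γ : ℤ × ℤ, (f γ : Fq) * y 1 ^ γ.1 * y (1 + 1) ^ γ.2
      = (f γ : Fq) * gen 0 ^ γ.1 * gen 1 ^ γ.2 := by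
    intro γ
    rw [h1, show (1 + 1 : ℤ) = 2 from by norm_num, h2]
  rw [Finset.sum_congr rfl fun γ _ => this γ]

lemma master (b : ℕ) (y : ℤ → Fq) (d e : ℤ) (hd : d = 1 ∨ d = 2)
    (h1 : y 1 = gen 0) (h2 : y 2 = gen 1)
    (hz : zElem b y = Zexpr d e (gen 0) (gen 1)) (n : ℕ) (hn : 1 ≤ n) :
    (∃ f : ℤ × ℤ →₀ ℤ, IsLaurentExp y 1 f (zn b y n)) ∧
      ∀ f : ℤ × ℤ →₀ ℤ, IsLaurentExp y 1 f (zn b y n) →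
        IsMonicExp f ∧ newt f = convexHull ℝ
          ({toR (-(n : ℤ), -(d * n)), toR ((n : ℤ), -(d * n)), toR (-(n : ℤ), d * n)} :
            Set (ℝ × ℝ)) := by
  have hd0 : 0 < d := by rcases hd with rfl | rfl <;> norm_num
  have hev : ev (gen 0) (gen 1) (FF d e n) = zn b y n := ev_FF b y d e hz n
  have hInv : Invt d e n (FF d e n) := FF_inv hd n
  constructor
  · exact ⟨FF d e n, (isLaurent_iff y h1 h2 _ _).mpr hev.symm⟩
  · intro f hf
    have hfev : zn b y n = ev (gen 0) (gen 1) f := (isLaurent_iff y h1 h2 _ _).mp hf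
    have hfFF : f = FF d e n := by
      have h0 : ev (gen 0) (gen 1) (f - FF d e n) = 0 := by
        rw [ev_sub, ← hfev, hev, sub_self]
      exact sub_eq_zero.mp (ev_inj_zero _ h0)
    subst hfFF
    set vA : ℤ × ℤ := (-(n : ℤ), -(d * n)) with hvA
    set vB : ℤ × ℤ := ((n : ℤ), -(d * n)) with hvB
    set vC : ℤ × ℤ := (-(n : ℤ), d * n) with hvC
    have hreg : ∀ γ ∈ (FF d e n).support, Reg d n γ.1 γ.2 := by
      intro γ hγ
      by_contra hc
      exact Finsupp.mem_support_iff.mp hγ (hInv.1 γ.1 γ.2 hc)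
    have hAmem : vA ∈ (FF d e n).support := Finsupp.mem_support_iff.mpr (by rw [hInv.2.1]; norm_num)
    have hBmem : vB ∈ (FF d e n).support :=
      Finsupp.mem_support_iff.mpr (by rw [hInv.2.2.1]; norm_num)
    have hCmem : vC ∈ (FF d e n).support :=
      Finsupp.mem_support_iff.mpr (by rw [hInv.2.2.2]; norm_num)
    have hnewt : newt (FF d e n) = convexHull ℝ ({toR vA, toR vB, toR vC} : Set (ℝ × ℝ)) := by
      apply Set.Subset.antisymm
      · apply convexHull_min _ (convex_convexHull ℝ _)
        rintro p ⟨γ, hγ, rfl⟩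
        have := reg_mem_tri hd0 n hn γ.1 γ.2 (hreg γ hγ)
        simpa using this
      · apply convexHull_min _ (convex_convexHull ℝ _)
        rintro p hp
        rcases hp with rfl | rfl | rfl
        · exact subset_convexHull ℝ _ ⟨vA, hAmem, rfl⟩
        · exact subset_convexHull ℝ _ ⟨vB, hBmem, rfl⟩
        · exact subset_convexHull ℝ _ ⟨vC, hCmem, rfl⟩
    refine ⟨?_, hnewt⟩
    intro γ hγ
    rw [hnewt] at hγ
    have hsub := extremePoints_convexHull_subset hγ
    rcases hsub with h | h | h
    · rw [toR_inj h]; exact hInv.2.1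
    · rw [toR_inj h]; exact hInv.2.2.1
    · rw [toR_inj h]; exact hInv.2.2.2

/-- in the affine cases, `z_n` (`n ≥ 1`) is a monic Laurent polynomial in
`y₁, y₂` whose Newton polygon is the triangle with vertices `(-n,-n), (n,-n), (-n,n)` for
`(b,c) = (2,2)`, resp. `(-n,-2n), (n,-2n), (-n,2n)` for `(b,c) = (1,4)`. -/
theorem stmt_14 (b c : ℕ) (haff : (b = 2 ∧ c = 2) ∨ (b = 1 ∧ c = 4))
    (y : ℤ → Fq) (hy : IsClusterSeq b c y) (n : ℕ) (hn : 1 ≤ n) :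
    (∃ f : ℤ × ℤ →₀ ℤ, IsLaurentExp y 1 f (zn b y n)) ∧
      ∀ f : ℤ × ℤ →₀ ℤ, IsLaurentExp y 1 f (zn b y n) →
        IsMonicExp f ∧
          newt f = convexHull ℝ
            (if b = 2 then
              ({((-n : ℝ), (-n : ℝ)), ((n : ℝ), (-n : ℝ)), ((-n : ℝ), (n : ℝ))} :
                Set (ℝ × ℝ))
            else
              {((-n : ℝ), (-2 * n : ℝ)), ((n : ℝ), (-2 * n : ℝ)),
                ((-n : ℝ), (2 * n : ℝ))}) := by
  rcases haff with ⟨hb, hc⟩ | ⟨hb, hc⟩ <;> subst hb <;> subst hc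
  · have hm := master 2 y 1 0 (Or.inl rfl) hy.1 hy.2.1 (hz22 y hy) n hn
    have hset : (if (2 : ℕ) = 2 then
        ({((-n : ℝ), (-n : ℝ)), ((n : ℝ), (-n : ℝ)), ((-n : ℝ), (n : ℝ))} : Set (ℝ × ℝ))
        else {((-n : ℝ), (-2 * n : ℝ)), ((n : ℝ), (-2 * n : ℝ)), ((-n : ℝ), (2 * n : ℝ))})
        = ({toR (-(n : ℤ), -((1 : ℤ) * n)), toR ((n : ℤ), -((1 : ℤ) * n)),
            toR (-(n : ℤ), (1 : ℤ) * n)} : Set (ℝ × ℝ)) := by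
      rw [if_pos rfl]
      norm_num [toR]
    rw [hset]
    exact hm
  · have hm := master 1 y 2 2 (Or.inr rfl) hy.1 hy.2.1 (hz14 y hy) n hn
    have hset : (if (1 : ℕ) = 2 then
        ({((-n : ℝ), (-n : ℝ)), ((n : ℝ), (-n : ℝ)), ((-n : ℝ), (n : ℝ))} : Set (ℝ × ℝ))
        else {((-n : ℝ), (-2 * n : ℝ)), ((n : ℝ), (-2 * n : ℝ)), ((-n : ℝ), (2 * n : ℝ))})
        = ({toR (-(n : ℤ), -((2 : ℤ) * n)), toR ((n : ℤ), -((2 : ℤ) * n)),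
            toR (-(n : ℤ), (2 : ℤ) * n)} : Set (ℝ × ℝ)) := by
      rw [if_neg (by norm_num)]
      norm_num [toR]
    rw [hset]
    exact hm
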